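/- arXiv:1802.04022 — 4 statements merged into one kernel-verified Lean document; each statement's English description precedes it below -/
import Mathlib

section
/- Let G(T) be the threshold graph on {1,…,n} with construction sequence T and Laplacian matrix L. Then the characteristic polynomial of L equals X·∏_{i=2}^{n} (X − (d(i) + [T(i) = 1])), where [T(i) = 1] denotes 1 if T(i) = 1 and 0 otherwise. In particular, the multiset of Laplacian eigenvalues of G(T) is {0} ∪ {d(i) + [T(i) = 1] : 2 ≤ i ≤ n}. -/
open Finset Matrix Polynomial

/-- The threshold graph on `Fin n` (vertex `i` of the paper corresponds to `⟨i-1, _⟩ : Fin n`)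
with construction sequence `T` : two distinct vertices are adjacent iff the later one
(in the construction order) was added by a join operation. -/
def thresholdGraph (n : ℕ) (T : Fin n → Bool) : SimpleGraph (Fin n) where
  Adj i j := i ≠ j ∧ T (max i j) = true
  symm := by
    constructor
    intro i j h
    exact ⟨h.1.symm, by rw [max_comm]; exact h.2⟩
  loopless := by
    constructor
    intro i h
    exact h.1 rfl

instance thresholdGraph.instDecidableRelAdj (n : ℕ) (T : Fin n → Bool) :
    DecidableRel (thresholdGraph n T).Adj :=
  fun i j => decidable_of_iff (i ≠ j ∧ T (max i j) = true) Iff.rfl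

/-!
Take the basis `e₀, e₁ - e₀, …, e_{n-1} - e_{n-2}` and list `e₀` last. For `k > i` both `L k i`
and `L k (i-1)` equal `-[T k = 1]`, so `L (eᵢ - e_{i-1})` is supported on `{0, …, i}`; having
coordinate sum zero, it lies in the span of `e₁ - e₀, …, eᵢ - e_{i-1}`, with last coefficient
`L i i - L i (i-1) = d(i) + [T i = 1]`. The coordinate of `L e₀` along `e₀` is its coordinate sum,
which is `0`. So `L` is triangular in this basis, with diagonal `d(i) + [T i = 1]` and `0`.
-/

theorem Matrix.charpoly_of_blockTriangular_of_injective {R n α : Type*} [CommRing R]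
    [Fintype n] [DecidableEq n] [LinearOrder α] {M : Matrix n n R} {b : n → α}
    (hb : Function.Injective b) (hM : M.BlockTriangular b) :
    M.charpoly = ∏ i, (X - C (M i i)) :=
  letI : LinearOrder n := LinearOrder.lift' b hb
  M.charpoly_of_isUpperTriangular hM

def Fin.predOrTop {n : ℕ} (i : Fin (n + 1)) : WithTop (Fin n) :=
  Fin.cases (motive := fun _ => WithTop (Fin n)) ⊤ WithTop.some i

lemma Fin.predOrTop_injective {n : ℕ} : Function.Injective (Fin.predOrTop (n := n)) := by
  intro i j h
  induction i using Fin.cases <;> induction j using Fin.cases <;> simp_all [Fin.predOrTop]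

lemma Matrix.blockTriangular_predOrTop {R : Type*} [Zero R] {n : ℕ}
    {M : Matrix (Fin (n + 1)) (Fin (n + 1)) R} (hrow : ∀ j : Fin n, M 0 j.succ = 0)
    (htri : ∀ i j : Fin n, i < j → M j.succ i.succ = 0) :
    M.BlockTriangular Fin.predOrTop := by
  intro i j hji
  induction i using Fin.cases with
  | zero =>
    induction j using Fin.cases with
    | zero => exact absurd hji (lt_irrefl _)
    | succ j => exact hrow j
  | succ i =>
    induction j using Fin.cases with
    | zero => simp [Fin.predOrTop] at hji
    | succ j => exact htri j i (by simpa [Fin.predOrTop] using hji)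

section DiffMatrix

variable {R : Type*} [Ring R] {n : ℕ}

variable (R n) in
def diffMatrix : Matrix (Fin (n + 1)) (Fin (n + 1)) R :=
  Matrix.of fun l i => Fin.cases (if l = 0 then 1 else 0)
    (fun i => (if l = i.succ then 1 else 0) - if l = i.castSucc then 1 else 0) i

variable (R n) in
def tailSumMatrix : Matrix (Fin (n + 1)) (Fin (n + 1)) R :=
  Matrix.of fun j k => if j ≤ k then 1 else 0

lemma mul_diffMatrix_apply_zero (B : Matrix (Fin (n + 1)) (Fin (n + 1)) R) (k : Fin (n + 1)) :
    (B * diffMatrix R n) k 0 = B k 0 := by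
  simp [diffMatrix, Matrix.mul_apply]

lemma mul_diffMatrix_apply_succ (B : Matrix (Fin (n + 1)) (Fin (n + 1)) R) (k : Fin (n + 1))
    (i : Fin n) : (B * diffMatrix R n) k i.succ = B k i.succ - B k i.castSucc := by
  simp [diffMatrix, Matrix.mul_apply, mul_sub, Finset.sum_sub_distrib]

lemma tailSumMatrix_mul_apply (B : Matrix (Fin (n + 1)) (Fin (n + 1)) R) (j i : Fin (n + 1)) :
    (tailSumMatrix R n * B) j i = ∑ k with j ≤ k, B k i := by
  simp [tailSumMatrix, Matrix.mul_apply, Finset.sum_filter]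

lemma tailSumMatrix_mul_apply_zero (B : Matrix (Fin (n + 1)) (Fin (n + 1)) R) (i : Fin (n + 1)) :
    (tailSumMatrix R n * B) 0 i = ((fun _ => 1) ᵥ* B) i := by
  simp [tailSumMatrix_mul_apply, Matrix.vecMul, dotProduct]

lemma tailSumMatrix_mul_diffMatrix : tailSumMatrix R n * diffMatrix R n = 1 := by
  ext j i
  induction i using Fin.cases with
  | zero => simp [mul_diffMatrix_apply_zero, tailSumMatrix, Matrix.one_apply]
  | succ i =>
    rw [mul_diffMatrix_apply_succ]
    simp only [tailSumMatrix, Matrix.of_apply, Matrix.one_apply]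
    split_ifs <;> simp_all [Fin.le_iff_val_le_val, Fin.ext_iff] <;> omega

end DiffMatrix

section Charpoly

variable {R : Type*} [CommRing R] {n : ℕ}

lemma charpoly_tailSumMatrix_mul_mul_diffMatrix (A : Matrix (Fin (n + 1)) (Fin (n + 1)) R) :
    (tailSumMatrix R n * (A * diffMatrix R n)).charpoly = A.charpoly := by
  have h : diffMatrix R n * tailSumMatrix R n = 1 := mul_eq_one_comm.mp tailSumMatrix_mul_diffMatrix
  rw [charpoly_mul_comm, Matrix.mul_assoc, h, Matrix.mul_one]

theorem Matrix.charpoly_eq_X_mul_prod_of_vecMul_const_eq_zero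
    {A : Matrix (Fin (n + 1)) (Fin (n + 1)) R} (hcol : (fun _ => 1) ᵥ* A = 0)
    (hstep : ∀ (i : Fin n) (k : Fin (n + 1)), i.succ < k → A k i.succ = A k i.castSucc) :
    A.charpoly = X * ∏ i : Fin n, (X - C (A i.succ i.succ - A i.succ i.castSucc)) := by
  have hB : ∀ (i : Fin n) k, i.succ < k → (A * diffMatrix R n) k i.succ = 0 := fun i k hk => by
    rw [mul_diffMatrix_apply_succ, hstep i k hk, sub_self]
  have hrow : ∀ i, (tailSumMatrix R n * (A * diffMatrix R n)) 0 i = 0 := fun i => by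
    rw [tailSumMatrix_mul_apply_zero, ← Matrix.vecMul_vecMul, hcol, Matrix.zero_vecMul,
      Pi.zero_apply]
  have htri : ∀ i j : Fin n, i < j →
      (tailSumMatrix R n * (A * diffMatrix R n)) j.succ i.succ = 0 := fun i j hij => by
    rw [tailSumMatrix_mul_apply]
    exact Finset.sum_eq_zero fun k hk => hB i k
      ((Fin.succ_lt_succ_iff.mpr hij).trans_le (Finset.mem_filter.mp hk).2)
  have hdiag : ∀ i : Fin n, (tailSumMatrix R n * (A * diffMatrix R n)) i.succ i.succ =
      A i.succ i.succ - A i.succ i.castSucc := fun i => by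
    rw [tailSumMatrix_mul_apply, Finset.sum_eq_single_of_mem i.succ (by simp)
      fun k hk hne => hB i k (lt_of_le_of_ne (Finset.mem_filter.mp hk).2 hne.symm),
      mul_diffMatrix_apply_succ]
  -- The row of `0` vanishes but its column need not, so `0` has to come last in the order.
  rw [← charpoly_tailSumMatrix_mul_mul_diffMatrix, charpoly_of_blockTriangular_of_injective
    Fin.predOrTop_injective (blockTriangular_predOrTop (fun j => hrow j.succ) htri),
    Fin.prod_univ_succ, hrow, map_zero, sub_zero]
  simp only [hdiag]

end Charpoly

namespace SimpleGraph

variable {R V : Type*} [Fintype V] [DecidableEq V] (G : SimpleGraph V) [DecidableRel G.Adj]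

lemma lapMatrix_apply_self [AddGroupWithOne R] (i : V) : G.lapMatrix R i i = G.degree i := by
  simp [lapMatrix, degMatrix]

lemma lapMatrix_apply_of_ne [AddGroupWithOne R] {i j : V} (h : i ≠ j) :
    G.lapMatrix R i j = -(if G.Adj i j then 1 else 0) := by
  simp [lapMatrix, degMatrix, h]

lemma const_vecMul_lapMatrix [CommRing R] : (fun _ => 1) ᵥ* G.lapMatrix R = 0 := by
  rw [← Matrix.mulVec_transpose, (isSymm_lapMatrix R G).eq, lapMatrix_mulVec_const_eq_zero]

end SimpleGraph

lemma thresholdGraph_lapMatrix_apply_of_ne {R : Type*} [AddGroupWithOne R] {n : ℕ}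
    (T : Fin n → Bool) {i j : Fin n} (h : i ≠ j) :
    (thresholdGraph n T).lapMatrix R i j = -(if T (max i j) then 1 else 0) := by
  rw [SimpleGraph.lapMatrix_apply_of_ne _ h]
  simp [thresholdGraph, h]

theorem charpoly_lapMatrix_thresholdGraph {R : Type*} [CommRing R] {n : ℕ}
    (T : Fin (n + 1) → Bool) :
    ((thresholdGraph (n + 1) T).lapMatrix R).charpoly =
      X * ∏ i : Fin n,
        (X - C (((thresholdGraph (n + 1) T).degree i.succ : R) + if T i.succ then 1 else 0)) := by
  refine (Matrix.charpoly_eq_X_mul_prod_of_vecMul_const_eq_zero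
    (SimpleGraph.const_vecMul_lapMatrix _) fun i k hk => ?_).trans ?_
  · have hk' : i.castSucc < k := i.castSucc_lt_succ.trans hk
    rw [thresholdGraph_lapMatrix_apply_of_ne T hk.ne', thresholdGraph_lapMatrix_apply_of_ne T
      hk'.ne', max_eq_left hk.le, max_eq_left hk'.le]
  · congr! 3 with i
    rw [SimpleGraph.lapMatrix_apply_self, thresholdGraph_lapMatrix_apply_of_ne T
      i.castSucc_lt_succ.ne', max_eq_left i.castSucc_lt_succ.le, sub_neg_eq_add]

theorem charpoly_thresholdGraph_general (n : ℕ) (T : Fin n → Bool) (hn : 0 < n) :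
    ((thresholdGraph n T).lapMatrix ℝ).charpoly =
      X * ∏ i ∈ Finset.univ.erase (⟨0, hn⟩ : Fin n),
        (X - C (((thresholdGraph n T).degree i : ℝ) + (if T i = true then 1 else 0))) := by
  obtain ⟨m, rfl⟩ := Nat.exists_eq_succ_of_ne_zero hn.ne'
  rw [charpoly_lapMatrix_thresholdGraph, Fin.mk_zero, ← Finset.compl_singleton,
    ← Fin.image_succ_univ, Finset.prod_image (Fin.succ_injective _).injOn]

/-- the characteristic polynomial of the Laplacian of a threshold graph is
`X·∏_{i=2}^{n} (X − (d(i) + [T(i) = 1]))`, so the Laplacian spectrum is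
`{0} ∪ {d(i) + [T(i)=1] : 2 ≤ i ≤ n}`. (Paper vertices `2,…,n` correspond to the nonzero
elements of `Fin n`.) -/
theorem charpoly_thresholdGraph (n : ℕ) (T : Fin n → Bool) (hn : 0 < n)
    (hT1 : T ⟨0, hn⟩ = false) :
    ((thresholdGraph n T).lapMatrix ℝ).charpoly =
      X * ∏ i ∈ Finset.univ.erase (⟨0, hn⟩ : Fin n),
        (X - C (((thresholdGraph n T).degree i : ℝ) + (if T i = true then 1 else 0))) :=
  charpoly_thresholdGraph_general n T hn
end

section
/- Let G(T) be the threshold graph on {1,…,n} with construction sequence T and Laplacian matrix L. Let V be the n×n real matrix whose first column is the all-ones vector 1_n and whose i-th column, for 2 ≤ i ≤ n, is C(i−1). Then V is invertible and L·V = V·D, where D is the diagonal matrix with D_{11} = 0 and D_{ii} = d(i) + [T(i) = 1] for 2 ≤ i ≤ n; that is, the columns of V form a basis of ℝ^n consisting of eigenvectors of L (a modal matrix of G(T)). -/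
open Finset Matrix Polynomial

/-- `Cvec n k` is the vector `C(k) ∈ ℝ^n` of the paper: its first `k` entries equal `1`, its
`(k+1)`-st entry equals `−k`, and its remaining entries equal `0` (0-indexed over `Fin n`). -/
def Cvec (n k : ℕ) : Fin n → ℝ := fun j =>
  if (j : ℕ) < k then 1 else if (j : ℕ) = k then -(k : ℝ) else 0

/-! The columns of `V` are pairwise orthogonal: `C(k)` sums to zero and equals `1` on the support
of every `C(j)` with `j < k`. Hence `Vᵀ V` is diagonal with nonzero entries, and `V` is invertible.

For the eigen-equation, split `(L x)_r = ∑ₛ A_rs (x_r - x_s)` at the index `c` of `x = C(c)`. Two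
vertices `r ≠ s` of a threshold graph are adjacent iff `T (max r s)`, so the blocks `s < c`,
`s = c` and `s > c` reduce to multiples of `c·[T c]` and of `#{s > c | T s}`, and these two
numbers add up to the degree of `c`. -/

open SimpleGraph

theorem Finset.sum_univ_eq_sum_Iio_add_add_sum_Ioi {α M : Type*} [Fintype α] [LinearOrder α]
    [LocallyFiniteOrderBot α] [LocallyFiniteOrderTop α] [AddCommMonoid M] (f : α → M) (a : α) :
    ∑ x, f x = ∑ x ∈ Iio a, f x + f a + ∑ x ∈ Ioi a, f x := by
  rw [← sum_filter_add_sum_filter_not univ (· < a), add_assoc, ← sum_cons (f := f) notMem_Ioi_self,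
    ← Ici_eq_cons_Ioi]
  congr 1 <;> apply sum_congr _ fun _ _ => rfl <;> ext x <;> simp

theorem SimpleGraph.lapMatrix_mulVec_apply_eq_sum_adjMatrix {V R : Type*} [Fintype V]
    [DecidableEq V] [NonAssocRing R] (G : SimpleGraph V) [DecidableRel G.Adj] (x : V → R) (v : V) :
    (G.lapMatrix R *ᵥ x) v = ∑ u, G.adjMatrix R v u * (x v - x u) := by
  rw [lapMatrix, sub_mulVec, Pi.sub_apply, degMatrix_mulVec_apply, degree_eq_sum_if_adj]
  simp only [mulVec, dotProduct, adjMatrix_apply, mul_sub, sum_sub_distrib, sum_mul]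

section Cvec

variable {n k m : ℕ} {j : Fin n}

theorem Cvec_of_lt (h : (j : ℕ) < k) : Cvec n k j = 1 := if_pos h

theorem Cvec_self : Cvec n j j = -(j : ℝ) := by simp [Cvec]

theorem Cvec_of_gt (h : k < j) : Cvec n k j = 0 := by simp [Cvec, h.not_gt, h.ne']

theorem sum_Cvec (c : Fin n) : ∑ j, Cvec n c j = 0 := by
  rw [sum_univ_eq_sum_Iio_add_add_sum_Ioi _ c,
    sum_congr rfl fun j hj => Cvec_of_lt (Fin.lt_def.1 (mem_Iio.1 hj)),
    sum_congr rfl fun j hj => Cvec_of_gt (Fin.lt_def.1 (mem_Ioi.1 hj)), Cvec_self]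
  simp

theorem Cvec_mul_Cvec_of_lt (h : k < m) (j : Fin n) : Cvec n k j * Cvec n m j = Cvec n k j := by
  rcases lt_trichotomy (j : ℕ) k with hj | rfl | hj
  · simp [Cvec_of_lt hj, Cvec_of_lt (hj.trans h)]
  · simp [Cvec_self, Cvec_of_lt h]
  · simp [Cvec_of_gt hj]

theorem sum_Cvec_mul_self (c : Fin n) : ∑ j, Cvec n c j * Cvec n c j = c + (c : ℝ) ^ 2 := by
  rw [sum_univ_eq_sum_Iio_add_add_sum_Ioi _ c,
    sum_congr rfl fun j hj => show Cvec n c j * Cvec n c j = 1 by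
      rw [Cvec_of_lt (Fin.lt_def.1 (mem_Iio.1 hj)), one_mul],
    sum_congr rfl fun j hj => show Cvec n c j * Cvec n c j = 0 by
      rw [Cvec_of_gt (Fin.lt_def.1 (mem_Ioi.1 hj)), zero_mul], Cvec_self]
  simp [sq]

end Cvec

section thresholdGraph

variable {n : ℕ} {T : Fin n → Bool} {r s c : Fin n}

theorem thresholdGraph_adj_of_lt (h : r < s) : (thresholdGraph n T).Adj r s ↔ T s = true := by
  simp [thresholdGraph, h.ne, max_eq_right h.le]

theorem thresholdGraph_adjMatrix_of_lt (h : r < s) :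
    (thresholdGraph n T).adjMatrix ℝ r s = if T s = true then 1 else 0 := by
  simp only [adjMatrix_apply, thresholdGraph_adj_of_lt h]

theorem thresholdGraph_adjMatrix_of_gt (h : s < r) :
    (thresholdGraph n T).adjMatrix ℝ r s = if T r = true then 1 else 0 := by
  rw [← (thresholdGraph n T).isSymm_adjMatrix.apply r s, thresholdGraph_adjMatrix_of_lt h]

theorem sum_Iio_thresholdGraph_adjMatrix (h : c ≤ r) :
    ∑ s ∈ Iio c, (thresholdGraph n T).adjMatrix ℝ r s = c * if T r = true then 1 else 0 := by
  rw [sum_congr rfl fun s hs => thresholdGraph_adjMatrix_of_gt ((mem_Iio.1 hs).trans_le h),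
    sum_const, Fin.card_Iio, nsmul_eq_mul]

theorem sum_Ioi_thresholdGraph_adjMatrix (h : r ≤ c) :
    ∑ s ∈ Ioi c, (thresholdGraph n T).adjMatrix ℝ r s =
      ∑ s ∈ Ioi c, if T s = true then 1 else 0 :=
  sum_congr rfl fun _ hs => thresholdGraph_adjMatrix_of_lt (h.trans_lt (mem_Ioi.1 hs))

theorem thresholdGraph_degree (c : Fin n) :
    ((thresholdGraph n T).degree c : ℝ) =
      c * (if T c = true then 1 else 0) + ∑ s ∈ Ioi c, if T s = true then 1 else 0 := by
  simp only [degree_eq_sum_if_adj, ← adjMatrix_apply]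
  rw [sum_univ_eq_sum_Iio_add_add_sum_Ioi _ c, sum_Iio_thresholdGraph_adjMatrix le_rfl,
    sum_Ioi_thresholdGraph_adjMatrix le_rfl, adjMatrix_apply, if_neg (SimpleGraph.irrefl _),
    add_zero]

end thresholdGraph

theorem thresholdGraph_lapMatrix_mulVec_Cvec {n : ℕ} (T : Fin n → Bool) (c : Fin n) :
    (thresholdGraph n T).lapMatrix ℝ *ᵥ Cvec n c =
      (((thresholdGraph n T).degree c : ℝ) + if T c = true then 1 else 0) • Cvec n c := by
  ext r
  have split_at_c : ((thresholdGraph n T).lapMatrix ℝ *ᵥ Cvec n c) r =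
      (Cvec n c r - 1) * ∑ s ∈ Iio c, (thresholdGraph n T).adjMatrix ℝ r s +
        (thresholdGraph n T).adjMatrix ℝ r c * (Cvec n c r + c) +
          Cvec n c r * ∑ s ∈ Ioi c, (thresholdGraph n T).adjMatrix ℝ r s := by
    rw [lapMatrix_mulVec_apply_eq_sum_adjMatrix, sum_univ_eq_sum_Iio_add_add_sum_Ioi _ c, Cvec_self,
      mul_sum, mul_sum]
    congr 1
    congr 1
    · exact sum_congr rfl fun s hs => by rw [Cvec_of_lt (Fin.lt_def.1 (mem_Iio.1 hs))]; ring
    · ring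
    · exact sum_congr rfl fun s hs => by rw [Cvec_of_gt (Fin.lt_def.1 (mem_Ioi.1 hs))]; ring
  rw [split_at_c, Pi.smul_apply, smul_eq_mul, thresholdGraph_degree]
  rcases lt_trichotomy r c with h | rfl | h
  · rw [Cvec_of_lt (Fin.lt_def.1 h), thresholdGraph_adjMatrix_of_lt h,
      sum_Ioi_thresholdGraph_adjMatrix h.le]
    ring
  · rw [Cvec_self, sum_Iio_thresholdGraph_adjMatrix le_rfl, sum_Ioi_thresholdGraph_adjMatrix le_rfl]
    ring
  · rw [Cvec_of_gt (Fin.lt_def.1 h), thresholdGraph_adjMatrix_of_gt h,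
      sum_Iio_thresholdGraph_adjMatrix h.le]
    ring

def modalMatrix (n : ℕ) : Matrix (Fin n) (Fin n) ℝ :=
  Matrix.of fun r c : Fin n => if (c : ℕ) = 0 then (1 : ℝ) else Cvec n (c : ℕ) r

theorem modalMatrix_transpose_mul_self_apply_of_lt {n : ℕ} {i j : Fin n} (h : i < j) :
    ((modalMatrix n)ᵀ * modalMatrix n) i j = 0 := by
  have hj : (j : ℕ) ≠ 0 := (Nat.zero_le _).trans_lt h |>.ne'
  simp only [mul_apply, transpose_apply, modalMatrix, of_apply, if_neg hj]
  split_ifs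
  · simpa using sum_Cvec j
  · simpa [Cvec_mul_Cvec_of_lt (Fin.lt_def.1 h)] using sum_Cvec i

theorem modalMatrix_transpose_mul_self (n : ℕ) :
    (modalMatrix n)ᵀ * modalMatrix n =
      diagonal fun c : Fin n => if (c : ℕ) = 0 then (n : ℝ) else c + (c : ℝ) ^ 2 := by
  ext i j
  rcases lt_trichotomy i j with h | rfl | h
  · rw [diagonal_apply_ne _ h.ne, modalMatrix_transpose_mul_self_apply_of_lt h]
  · simp only [diagonal_apply_eq, mul_apply, transpose_apply, modalMatrix, of_apply]
    split_ifs
    · simp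
    · exact sum_Cvec_mul_self i
  · rw [diagonal_apply_ne _ h.ne', ← transpose_apply ((modalMatrix n)ᵀ * modalMatrix n),
      transpose_mul, transpose_transpose, modalMatrix_transpose_mul_self_apply_of_lt h]

theorem isUnit_modalMatrix (n : ℕ) : IsUnit (modalMatrix n) := by
  have hdet := congrArg det (modalMatrix_transpose_mul_self n)
  rw [det_mul, det_transpose, det_diagonal] at hdet
  have hprod : ∏ c : Fin n, (if (c : ℕ) = 0 then (n : ℝ) else c + (c : ℝ) ^ 2) ≠ 0 := by
    refine prod_ne_zero_iff.2 fun c _ => ?_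
    split_ifs with hc
    · exact Nat.cast_ne_zero.2 c.pos.ne'
    · have : (0 : ℝ) < c := Nat.cast_pos.2 (Nat.pos_of_ne_zero hc)
      positivity
  rw [isUnit_iff_isUnit_det, isUnit_iff_ne_zero]
  exact fun h0 => hprod (by rw [← hdet, h0, mul_zero])

theorem thresholdGraph_lapMatrix_mul_modalMatrix {n : ℕ} (T : Fin n → Bool) :
    (thresholdGraph n T).lapMatrix ℝ * modalMatrix n =
      modalMatrix n * diagonal fun i : Fin n =>
        if (i : ℕ) = 0 then 0
        else ((thresholdGraph n T).degree i : ℝ) + if T i = true then 1 else 0 := by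
  ext r c
  rw [mul_diagonal]
  change ((thresholdGraph n T).lapMatrix ℝ *ᵥ fun s => modalMatrix n s c) r = _
  by_cases hc : (c : ℕ) = 0
  · simp [modalMatrix, hc, lapMatrix_mulVec_const_eq_zero]
  · simp only [modalMatrix, of_apply, if_neg hc, thresholdGraph_lapMatrix_mulVec_Cvec,
      Pi.smul_apply, smul_eq_mul, mul_comm]

theorem modal_matrix_thresholdGraph_general (n : ℕ) (T : Fin n → Bool) :
    IsUnit (Matrix.of fun r c : Fin n => if (c : ℕ) = 0 then (1 : ℝ) else Cvec n (c : ℕ) r) ∧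
      (thresholdGraph n T).lapMatrix ℝ *
          (Matrix.of fun r c : Fin n => if (c : ℕ) = 0 then (1 : ℝ) else Cvec n (c : ℕ) r) =
        (Matrix.of fun r c : Fin n => if (c : ℕ) = 0 then (1 : ℝ) else Cvec n (c : ℕ) r) *
          Matrix.diagonal (fun i : Fin n =>
            if (i : ℕ) = 0 then 0
            else ((thresholdGraph n T).degree i : ℝ) + (if T i = true then 1 else 0)) :=
  ⟨isUnit_modalMatrix n, thresholdGraph_lapMatrix_mul_modalMatrix T⟩

/-- the matrix `V` whose first column is the all-ones vector and whose `i`-th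
column (for `2 ≤ i ≤ n`) is `C(i−1)` is an invertible matrix satisfying `L·V = V·D`, where
`D` is diagonal with `D₁₁ = 0` and `D_{ii} = d(i) + [T(i) = 1]`; i.e. the columns of `V` form
an eigenvector basis of `ℝ^n` (a modal matrix of `G(T)`). -/
theorem modal_matrix_thresholdGraph (n : ℕ) (T : Fin n → Bool) (hn : 0 < n)
    (hT1 : T ⟨0, hn⟩ = false) :
    IsUnit (Matrix.of fun r c : Fin n => if (c : ℕ) = 0 then (1 : ℝ) else Cvec n (c : ℕ) r) ∧
      (thresholdGraph n T).lapMatrix ℝ *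
          (Matrix.of fun r c : Fin n => if (c : ℕ) = 0 then (1 : ℝ) else Cvec n (c : ℕ) r) =
        (Matrix.of fun r c : Fin n => if (c : ℕ) = 0 then (1 : ℝ) else Cvec n (c : ℕ) r) *
          Matrix.diagonal (fun i : Fin n =>
            if (i : ℕ) = 0 then 0
            else ((thresholdGraph n T).degree i : ℝ) + (if T i = true then 1 else 0)) :=
  modal_matrix_thresholdGraph_general n T
end

section
/- Let G(T) be the threshold graph on {1,…,n} with construction sequence T and Laplacian matrix L, and let λ be a nonzero real number. Then every vector v ∈ ℝ^n with L·v = λ·v lies in the linear span of the set of vectors {C(i−1) : 2 ≤ i ≤ n, d(i) + [T(i) = 1] = λ}; in other words, the eigenspace of L for any nonzero eigenvalue λ is spanned by those vectors C(i−1) whose associated value d(i) + [T(i) = 1] equals λ. -/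
/-!
The neighbours of a vertex `i` are all earlier vertices if `T(i) = 1`, and the later vertices `j`
with `T(j) = 1`. Since `C(k)` sums to zero over its support `{1, …, k+1}`, counting with
`(L x)_i = ∑_{j ~ i} (x_i - x_j)` gives `L C(k) = (d(k+1) + [T(k+1) = 1]) C(k)` for `1 ≤ k < n`.

The `C(k)` are pairwise orthogonal and orthogonal to the all-ones vector `𝟙`, and a vector
orthogonal to all of them is constant, so together with `𝟙` they form an orthogonal basis.
An eigenvector `v` for `λ ≠ 0` is orthogonal to `𝟙 ∈ ker L`, hence is the sum of its projections
onto the `C(k)`; as `L` is symmetric, the projection onto `C(k)` vanishes unless the eigenvalue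
of `C(k)` is `λ`.
-/

open Finset Matrix Polynomial

section Cvec

variable {n : ℕ}

lemma Cvec_zero : Cvec n 0 = 0 := by
  ext j
  simp [Cvec]

lemma Cvec_apply_of_lt {k j : Fin n} (h : j < k) : Cvec n k j = 1 := if_pos h

lemma Cvec_apply_self (k : Fin n) : Cvec n k k = -k := by
  simp [Cvec]

lemma Cvec_apply_of_gt {k j : Fin n} (h : k < j) : Cvec n k j = 0 := by
  rw [Fin.lt_def] at h
  simp only [Cvec]
  rw [if_neg (by omega), if_neg (by omega)]

lemma Cvec_dotProduct (k : Fin n) (w : Fin n → ℝ) :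
    Cvec n k ⬝ᵥ w = ∑ l ∈ Iio k, w l - k * w k := by
  rw [dotProduct, ← sum_subset (subset_univ (Iic k)) fun l _ hl => ?_, ← Iio_insert,
    sum_insert notMem_Iio_self, Cvec_apply_self,
    sum_congr rfl fun l hl => by rw [Cvec_apply_of_lt (mem_Iio.1 hl), one_mul]]
  · ring
  · rw [Cvec_apply_of_gt (not_le.1 (mem_Iic.not.1 hl)), zero_mul]

lemma Cvec_dotProduct_one (k : Fin n) : Cvec n k ⬝ᵥ 1 = 0 := by
  simp [Cvec_dotProduct, Fin.card_Iio]

lemma sum_Iio_Cvec_of_lt {k i : Fin n} (h : k < i) : ∑ j ∈ Iio i, Cvec n k j = 0 := by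
  rw [sum_subset (subset_univ _) fun j _ hj =>
      Cvec_apply_of_gt (h.trans_le (not_lt.1 (mem_Iio.not.1 hj))),
    ← dotProduct_one, Cvec_dotProduct_one]

lemma sum_Iio_Cvec_of_le {k i : Fin n} (h : i ≤ k) : ∑ j ∈ Iio i, Cvec n k j = i := by
  rw [sum_congr rfl fun _ hj => Cvec_apply_of_lt ((mem_Iio.1 hj).trans_le h)]
  simp [Fin.card_Iio]

lemma sum_filter_Ioi_Cvec_of_le (p : Fin n → Prop) [DecidablePred p] {k i : Fin n} (h : k ≤ i) :
    ∑ j ∈ Ioi i with p j, Cvec n k j = 0 :=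
  sum_eq_zero fun _ hj => Cvec_apply_of_gt (h.trans_lt (mem_Ioi.1 (mem_filter.1 hj).1))

lemma sum_filter_Ioi_one_sub_Cvec_of_lt (p : Fin n → Prop) [DecidablePred p] {k i : Fin n}
    (h : i < k) :
    ∑ j ∈ Ioi i with p j, (1 - Cvec n k j) =
      (if p k then (k : ℝ) + 1 else 0) + #{j ∈ Ioi k | p j} := by
  have hsub : {j ∈ Ici k | p j} ⊆ {j ∈ Ioi i | p j} := fun j hj => by
    simp only [mem_filter, mem_Ici, mem_Ioi] at hj ⊢
    exact ⟨h.trans_le hj.1, hj.2⟩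
  have hIoi : ∑ j ∈ Ioi k with p j, (1 - Cvec n k j) = #{j ∈ Ioi k | p j} := by
    rw [sum_sub_distrib, sum_filter_Ioi_Cvec_of_le p le_rfl]
    simp
  rw [← sum_subset hsub fun j hj hj' => ?_, ← Ioi_insert, filter_insert]
  · split_ifs with hk
    · rw [sum_insert (by simp), hIoi, Cvec_apply_self]
      ring
    · rw [hIoi, zero_add]
  · simp only [mem_filter, mem_Ici, mem_Ioi, not_and] at hj hj'
    rw [Cvec_apply_of_lt (not_le.1 fun hkj => hj' hkj hj.2), sub_self]

lemma Cvec_dotProduct_Cvec_of_lt {k m : Fin n} (h : k < m) : Cvec n k ⬝ᵥ Cvec n m = 0 := by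
  rw [Cvec_dotProduct, sum_congr rfl fun l hl => Cvec_apply_of_lt ((mem_Iio.1 hl).trans h),
    Cvec_apply_of_lt h]
  simp [Fin.card_Iio]

lemma Cvec_dotProduct_Cvec_of_ne {k m : Fin n} (h : k ≠ m) : Cvec n k ⬝ᵥ Cvec n m = 0 := by
  rcases h.lt_or_gt with h | h
  · exact Cvec_dotProduct_Cvec_of_lt h
  · rw [dotProduct_comm, Cvec_dotProduct_Cvec_of_lt h]

lemma eq_zero_of_sum_eq_zero_of_Cvec_dotProduct_eq_zero {w : Fin n → ℝ}
    (hsum : ∑ i, w i = 0) (hC : ∀ k : Fin n, Cvec n k ⬝ᵥ w = 0) : w = 0 := by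
  cases n with
  | zero => exact Subsingleton.elim _ _
  | succ m =>
    -- `Cvec n j ⬝ᵥ w = 0` says that `w j` is the mean of the earlier entries of `w`.
    have hconst (j : Fin (m + 1)) : w j = w 0 := by
      induction j using WellFoundedLT.induction with
      | _ j ih =>
        have hj := hC j
        rw [Cvec_dotProduct, sum_congr rfl fun l hl => ih l (mem_Iio.1 hl), sum_const,
          Fin.card_Iio, nsmul_eq_mul, ← mul_sub, mul_eq_zero, sub_eq_zero] at hj
        rcases hj with hj | hj
        · rw [show j = 0 from Fin.ext (Nat.cast_eq_zero.1 hj)]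
        · exact hj.symm
    simp only [hconst, sum_const, card_univ, Fintype.card_fin, nsmul_eq_mul, mul_eq_zero] at hsum
    ext j
    rw [hconst, hsum.resolve_left (by positivity), Pi.zero_apply]

lemma eq_sum_Cvec_of_sum_eq_zero {w : Fin n → ℝ} (hw : ∑ i, w i = 0) :
    w = ∑ k : Fin n, (Cvec n k ⬝ᵥ w / Cvec n k ⬝ᵥ Cvec n k) • Cvec n k := by
  rw [← sub_eq_zero]
  refine eq_zero_of_sum_eq_zero_of_Cvec_dotProduct_eq_zero ?_ fun m => ?_
  · rw [← dotProduct_one, sub_dotProduct, sum_dotProduct, dotProduct_one, hw]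
    simp only [smul_dotProduct, Cvec_dotProduct_one, smul_zero, sum_const_zero, sub_zero]
  · rw [dotProduct_sub, dotProduct_sum, sum_eq_single m
      (fun k _ hk => by rw [dotProduct_smul, Cvec_dotProduct_Cvec_of_ne hk.symm, smul_zero])
      (by simp), dotProduct_smul, smul_eq_mul,
      div_mul_cancel_of_imp fun h => by rw [dotProduct_self_eq_zero.1 h, zero_dotProduct], sub_self]

end Cvec

lemma Matrix.IsSymm.dotProduct_eq_zero_of_mulVec_eq_smul {m R : Type*} [Fintype m] [CommRing R]
    [NoZeroDivisors R] {A : Matrix m m R} (hA : A.IsSymm) {u v : m → R} {μ ν : R}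
    (hu : A *ᵥ u = μ • u) (hv : A *ᵥ v = ν • v) (h : μ ≠ ν) : u ⬝ᵥ v = 0 := by
  have : μ * (u ⬝ᵥ v) = ν * (u ⬝ᵥ v) := calc
    μ * (u ⬝ᵥ v) = (A *ᵥ u) ⬝ᵥ v := by rw [hu, smul_dotProduct, smul_eq_mul]
    _ = u ⬝ᵥ (A *ᵥ v) := by rw [dotProduct_mulVec, ← mulVec_transpose, hA.eq]
    _ = ν * (u ⬝ᵥ v) := by rw [hv, dotProduct_smul, smul_eq_mul]
  exact (mul_eq_mul_right_iff.1 this).resolve_left h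

lemma SimpleGraph.lapMatrix_mulVec_apply_eq_sum_sub {V R : Type*} [Fintype V] [DecidableEq V]
    (G : SimpleGraph V) [DecidableRel G.Adj] [NonAssocRing R] (x : V → R) (i : V) :
    (G.lapMatrix R *ᵥ x) i = ∑ j ∈ G.neighborFinset i, (x i - x j) := by
  rw [lapMatrix_mulVec_apply, sum_sub_distrib, sum_const, card_neighborFinset_eq_degree,
    nsmul_eq_mul]

namespace thresholdGraph

variable {n : ℕ} (T : Fin n → Bool)

lemma adj_iff {i j : Fin n} : (thresholdGraph n T).Adj i j ↔ j < i ∧ T i ∨ i < j ∧ T j := by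
  rcases lt_trichotomy i j with h | rfl | h
  · simp [thresholdGraph, h.ne, h.not_gt, max_eq_right h.le, h]
  · simp [thresholdGraph]
  · simp [thresholdGraph, h.ne', h.not_gt, max_eq_left h.le, h]

lemma neighborFinset_eq (i : Fin n) :
    (thresholdGraph n T).neighborFinset i =
      (Iio i).filter (fun _ => T i) ∪ {j ∈ Ioi i | T j} := by
  ext j
  simp only [SimpleGraph.mem_neighborFinset, adj_iff, mem_union, mem_filter, mem_Iio, mem_Ioi]

lemma sum_neighborFinset {M : Type*} [AddCommMonoid M] (f : Fin n → M) (i : Fin n) :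
    ∑ j ∈ (thresholdGraph n T).neighborFinset i, f j =
      (if T i then ∑ j ∈ Iio i, f j else 0) + ∑ j ∈ Ioi i with T j, f j := by
  rw [neighborFinset_eq, sum_union (disjoint_filter_filter (disjoint_Ioi_Iio i).symm), sum_filter,
    sum_ite_irrel, sum_const_zero]

lemma degree_eq (i : Fin n) :
    (thresholdGraph n T).degree i = (if T i then (i : ℕ) else 0) + #{j ∈ Ioi i | T j} := by
  rw [← SimpleGraph.card_neighborFinset_eq_degree, card_eq_sum_ones, sum_neighborFinset]
  simp [Fin.card_Iio]

lemma lapMatrix_mulVec_Cvec (k : Fin n) :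
    (thresholdGraph n T).lapMatrix ℝ *ᵥ Cvec n k =
      (((thresholdGraph n T).degree k : ℝ) + if T k then 1 else 0) • Cvec n k := by
  ext i
  rw [SimpleGraph.lapMatrix_mulVec_apply_eq_sum_sub, sum_neighborFinset, degree_eq, Pi.smul_apply,
    smul_eq_mul]
  push_cast
  rcases lt_trichotomy i k with h | rfl | h
  · rw [Cvec_apply_of_lt h, mul_one, sum_eq_zero fun j hj => by
        rw [Cvec_apply_of_lt ((mem_Iio.1 hj).trans h), sub_self], ite_self, zero_add,
      sum_filter_Ioi_one_sub_Cvec_of_lt _ h]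
    split_ifs <;> ring
  · rw [sum_sub_distrib, sum_sub_distrib, sum_Iio_Cvec_of_le le_rfl,
      sum_filter_Ioi_Cvec_of_le _ le_rfl]
    simp only [sum_const, Fin.card_Iio, nsmul_eq_mul, Cvec_apply_self, sub_zero]
    split_ifs <;> ring
  · rw [Cvec_apply_of_gt h, sum_sub_distrib, sum_sub_distrib, sum_Iio_Cvec_of_lt h,
      sum_filter_Ioi_Cvec_of_le _ h.le]
    simp

end thresholdGraph

theorem eigenspace_thresholdGraph_spanned_by_Cvec_general (n : ℕ) (T : Fin n → Bool) (lam : ℝ)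
    (hlam : lam ≠ 0) (v : Fin n → ℝ)
    (hv : (thresholdGraph n T).lapMatrix ℝ *ᵥ v = lam • v) :
    v ∈ Submodule.span ℝ {w : Fin n → ℝ | ∃ i : Fin n, (i : ℕ) ≠ 0 ∧
      ((thresholdGraph n T).degree i : ℝ) + (if T i = true then 1 else 0) = lam ∧
      w = Cvec n (i : ℕ)} := by
  have hL := SimpleGraph.isSymm_lapMatrix ℝ (thresholdGraph n T)
  have hsum : ∑ i, v i = 0 := by
    rw [← one_dotProduct]
    refine hL.dotProduct_eq_zero_of_mulVec_eq_smul (μ := 0) ?_ hv hlam.symm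
    rw [zero_smul]
    exact SimpleGraph.lapMatrix_mulVec_const_eq_zero _
  rw [eq_sum_Cvec_of_sum_eq_zero hsum]
  refine Submodule.sum_mem _ fun k _ => ?_
  by_cases hk : Cvec n k ⬝ᵥ v = 0
  · rw [hk, zero_div, zero_smul]
    exact Submodule.zero_mem _
  refine Submodule.smul_mem _ _ (Submodule.subset_span ⟨k, fun h0 => hk ?_, ?_, rfl⟩)
  · rw [h0, Cvec_zero, zero_dotProduct]
  · by_contra hne
    exact hk (hL.dotProduct_eq_zero_of_mulVec_eq_smul
      (thresholdGraph.lapMatrix_mulVec_Cvec T k) hv hne)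

/-- for any nonzero `λ`, every vector `v` with `L·v = λ·v` lies in the span of
the vectors `C(i−1)` (for paper vertices `2 ≤ i ≤ n`, i.e. `i : Fin n` with `(i : ℕ) ≠ 0`)
whose associated value `d(i) + [T(i) = 1]` equals `λ`. -/
theorem eigenspace_thresholdGraph_spanned_by_Cvec (n : ℕ) (T : Fin n → Bool) (hn : 0 < n)
    (hT1 : T ⟨0, hn⟩ = false) (lam : ℝ) (hlam : lam ≠ 0) (v : Fin n → ℝ)
    (hv : (thresholdGraph n T).lapMatrix ℝ *ᵥ v = lam • v) :
    v ∈ Submodule.span ℝ {w : Fin n → ℝ | ∃ i : Fin n, (i : ℕ) ≠ 0 ∧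
      ((thresholdGraph n T).degree i : ℝ) + (if T i = true then 1 else 0) = lam ∧
      w = Cvec n (i : ℕ)} :=
  eigenspace_thresholdGraph_spanned_by_Cvec_general n T lam hlam v hv
end

section
/- Let G(T) be a connected threshold graph on {1,…,n} (n ≥ 2) with construction sequence T and Laplacian matrix L, and let s = |{d(1),…,d(n)}| be the number of distinct vertex degrees. For every subset S ⊆ {1,…,n} with |S| < n − s, there exist a real number λ and a nonzero vector v ∈ ℝ^n with L·v = λ·v and v_j = 0 for all j ∈ S. (Hence fewer than n − s control nodes can never render the Laplacian network controllable, so the minimum number of control nodes is n − s.) -/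
open Finset Matrix Polynomial

/-!
By pigeonhole, two vertices `i ≠ j` outside `S` have the same degree. In a threshold graph the
neighbourhoods of `i` and `j`, each without the other vertex, are nested, so equal degrees make
`i` and `j` twins; for twins, `e_i - e_j` is an eigenvector of the Laplacian, with eigenvalue
`d(i) + [i ~ j]`, and it vanishes on `S`.
-/

namespace SimpleGraph

variable {V : Type*} [Fintype V] [DecidableEq V] (G : SimpleGraph V) [DecidableRel G.Adj]

theorem card_neighborFinset_erase_eq_iff_degree_eq (a b : V) :
    #((G.neighborFinset a).erase b) = #((G.neighborFinset b).erase a) ↔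
      G.degree a = G.degree b := by
  rw [← G.card_neighborFinset_eq_degree, ← G.card_neighborFinset_eq_degree]
  by_cases hab : G.Adj a b
  · have ha := Finset.card_erase_add_one ((G.mem_neighborFinset a b).2 hab)
    have hb := Finset.card_erase_add_one ((G.mem_neighborFinset b a).2 hab.symm)
    omega
  · rw [Finset.erase_eq_of_notMem (by simpa using hab),
      Finset.erase_eq_of_notMem (by simpa [G.adj_comm] using hab)]

theorem lapMatrix_mulVec_single_sub_single {R : Type*} [CommRing R] {a b : V} (hab : a ≠ b)
    (htwin : (G.neighborFinset a).erase b = (G.neighborFinset b).erase a) :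
    G.lapMatrix R *ᵥ (Pi.single a 1 - Pi.single b 1) =
      (G.degree a + if G.Adj a b then 1 else 0 : R) • (Pi.single a 1 - Pi.single b 1) := by
  have hdeg : G.degree a = G.degree b :=
    (G.card_neighborFinset_erase_eq_iff_degree_eq a b).1 (congrArg Finset.card htwin)
  ext k
  simp only [lapMatrix_mulVec_apply, Pi.sub_apply, Pi.smul_apply, smul_eq_mul,
    Finset.sum_sub_distrib, Finset.sum_pi_single', mem_neighborFinset]
  by_cases hka : k = a
  · subst hka
    simp [hab]
  by_cases hkb : k = b
  · subst hkb
    simp only [ne_eq, hab.symm, not_false_eq_true, Pi.single_eq_of_ne, Pi.single_eq_same,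
      zero_sub, mul_neg, mul_one, G.adj_comm k a, SimpleGraph.irrefl, ↓reduceIte, hdeg,
      neg_add_rev]
    ring
  · have hk : G.Adj k a ↔ G.Adj k b := by
      simpa [hka, hkb, G.adj_comm] using congrArg (k ∈ ·) htwin
    simp [hka, hkb, hk]

end SimpleGraph

section thresholdGraph

variable {n : ℕ} {T : Fin n → Bool} {i j : Fin n}

theorem thresholdGraph_adj_iff {k : Fin n} :
    (thresholdGraph n T).Adj i k ↔ i ≠ k ∧ T (max i k) = true := Iff.rfl

theorem thresholdGraph_neighborFinset_erase_subset_of_join (hij : i < j) (hj : T j = true) :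
    ((thresholdGraph n T).neighborFinset i).erase j ⊆
      ((thresholdGraph n T).neighborFinset j).erase i := by
  intro k
  simp only [Finset.mem_erase, SimpleGraph.mem_neighborFinset, thresholdGraph_adj_iff]
  rintro ⟨hkj, hik, hT⟩
  refine ⟨hik.symm, hkj.symm, ?_⟩
  rcases le_or_gt k j with hkj' | hjk
  · rwa [max_eq_left hkj']
  · rwa [max_eq_right hjk.le, ← max_eq_right (hij.trans hjk).le]

theorem thresholdGraph_neighborFinset_erase_subset_of_isolated (hij : i < j)
    (hj : T j = false) :
    ((thresholdGraph n T).neighborFinset j).erase i ⊆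
      ((thresholdGraph n T).neighborFinset i).erase j := by
  intro k
  simp only [Finset.mem_erase, SimpleGraph.mem_neighborFinset, thresholdGraph_adj_iff]
  rintro ⟨-, hjk, hT⟩
  have hjk : j < k := by
    by_contra! hkj
    rw [max_eq_left hkj, hj] at hT
    exact Bool.false_ne_true hT
  refine ⟨hjk.ne', (hij.trans hjk).ne, ?_⟩
  rwa [max_eq_right (hij.trans hjk).le, ← max_eq_right hjk.le]

/-- The two neighbourhoods are nested, so equal cardinality forces equality. -/
theorem thresholdGraph_neighborFinset_erase_eq_of_degree_eq (hij : i ≠ j)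
    (hd : (thresholdGraph n T).degree i = (thresholdGraph n T).degree j) :
    ((thresholdGraph n T).neighborFinset i).erase j =
      ((thresholdGraph n T).neighborFinset j).erase i := by
  wlog hlt : i < j generalizing i j
  · exact (this hij.symm hd.symm (hij.lt_or_gt.resolve_left hlt)).symm
  have hcard := ((thresholdGraph n T).card_neighborFinset_erase_eq_iff_degree_eq i j).2 hd
  cases hj : T j
  · exact (Finset.eq_of_subset_of_card_le
      (thresholdGraph_neighborFinset_erase_subset_of_isolated hlt hj) hcard.le).symm
  · exact Finset.eq_of_subset_of_card_le
      (thresholdGraph_neighborFinset_erase_subset_of_join hlt hj) hcard.ge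

end thresholdGraph

theorem thresholdGraph_uncontrollable_of_few_controls_general (n : ℕ) (T : Fin n → Bool)
    (S : Finset (Fin n))
    (hS : S.card < n - (Finset.univ.image (fun i => (thresholdGraph n T).degree i)).card) :
    ∃ (lam : ℝ) (v : Fin n → ℝ), v ≠ 0 ∧
      (thresholdGraph n T).lapMatrix ℝ *ᵥ v = lam • v ∧ ∀ j ∈ S, v j = 0 := by
  have hcard : #(univ.image fun i => (thresholdGraph n T).degree i) < #Sᶜ := by
    rw [card_compl, Fintype.card_fin]
    omega
  obtain ⟨i, hi, j, hj, hij, hd⟩ :=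
    exists_ne_map_eq_of_card_lt_of_maps_to hcard fun k _ =>
      mem_image_of_mem (fun i => (thresholdGraph n T).degree i) (mem_univ k)
  rw [mem_compl] at hi hj
  refine ⟨_, Pi.single i 1 - Pi.single j 1, ?_,
    (thresholdGraph n T).lapMatrix_mulVec_single_sub_single hij
      (thresholdGraph_neighborFinset_erase_eq_of_degree_eq hij hd), ?_⟩
  · intro h
    simpa [hij] using congrFun h i
  · intro k hk
    simp [ne_of_mem_of_not_mem hk hi, ne_of_mem_of_not_mem hk hj]

/-- if `s` is the number of distinct vertex degrees of a connected threshold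
graph, then for every set `S` of fewer than `n − s` control nodes there is a nonzero
eigenvector of the Laplacian vanishing on `S`; hence (by the PBH test) fewer than `n − s`
control nodes can never render the Laplacian network controllable. -/
theorem thresholdGraph_uncontrollable_of_few_controls (n : ℕ) (T : Fin n → Bool) (hn : 2 ≤ n)
    (hT1 : T ⟨0, lt_of_lt_of_le two_pos hn⟩ = false)
    (hconn : (thresholdGraph n T).Connected)
    (S : Finset (Fin n))
    (hS : S.card < n - (Finset.univ.image (fun i => (thresholdGraph n T).degree i)).card) :
    ∃ (lam : ℝ) (v : Fin n → ℝ), v ≠ 0 ∧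
      (thresholdGraph n T).lapMatrix ℝ *ᵥ v = lam • v ∧ ∀ j ∈ S, v j = 0 :=
  thresholdGraph_uncontrollable_of_few_controls_general n T S hS
end
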